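/- Let (X, μ) be a measure space, ω : X → ℝ measurable with ω(x) ≥ 1 for μ-a.e. x, f : X → ℂ measurable with ∫_X ω^{-1/2}|f|² dμ < ∞, and λ ≥ 0. For n ∈ ℕ let f_n = 1_{{ω ≤ n}}·f. For a measurable g define G₁(g, t) = ∫_X ω|g|²/(ω² + t²) dμ, G₂(g, t) = ∫_X ω|g|²/(ω² + t²)² dμ and I(g) = ∫₀^∞ t² · G₂(g, t) · G₁(g, t) / (1 + 4λ·G₁(g, t)) dt. Then I(f_n) converges to I(f) as n → ∞. -/

import Mathlib

/-!
For `|g| ≤ |f|` the kernels of `G₁(g, t)` and `G₂(g, t)` are at most `ω^{-1/2}` (as `ω ≥ 1`), so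
both are dominated by the integrable `ω^{-1/2}|f|²`: they converge along the cutoffs `f_n` and are
continuous in `t`. Since `t²G₂ ≤ G₁` and `G₁` is monotone in `|g|`, the `t`-integrand of `I(f_n)`
is at most `G₁(f, t)²`, and dominated convergence in `t` applies once `G₁(f, ·)² ∈ L¹(0, ∞)`.
For this, `G₁(f, t) = ∫ √ω · ω/(ω² + t²) dν` for the finite measure `ν = ω^{-1/2}|f|² μ`, so
Cauchy–Schwarz, Tonelli and `∫₀^∞ ω/(ω² + t²) dt = π/2` give `∫₀^∞ G₁(f, t)² dt ≤ (π/2) ν(X)²`.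
-/

open MeasureTheory Set Filter Topology ENNReal Real Function

lemma div_le_rpow_neg_half_mul {a b c D : ℝ} (ha : 1 ≤ a) (hD : a ^ 2 ≤ D) (hb : 0 ≤ b)
    (hbc : b ≤ c) : a * b / D ≤ a ^ (-(1:ℝ)/2) * c := by
  have ha0 : 0 < a := one_pos.trans_le ha
  have h_inv : a⁻¹ ≤ a ^ (-(1:ℝ)/2) := by
    rw [← Real.rpow_neg_one]
    exact Real.rpow_le_rpow_of_exponent_le ha (by norm_num)
  calc a * b / D ≤ a * b / a ^ 2 := div_le_div_of_nonneg_left (by positivity) (by positivity) hD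
    _ = a⁻¹ * b := by field_simp
    _ ≤ a ^ (-(1:ℝ)/2) * c := mul_le_mul h_inv hbc hb (by positivity)

lemma mul_div_sq_le_div {s c D : ℝ} (hs : 0 ≤ s) (hsD : s ≤ D) (hc : 0 ≤ c) :
    s * (c / D ^ 2) ≤ c / D := by
  have hD : 0 ≤ D := hs.trans hsD
  calc s * (c / D ^ 2) = c / D * (s / D) := by ring
    _ ≤ c / D := mul_le_of_le_one_right (div_nonneg hc hD) (div_le_one_of_le₀ hsD hD)

lemma sq_le_sq_add_sq_sq {a : ℝ} (ha : 1 ≤ a) (t : ℝ) : a ^ 2 ≤ (a ^ 2 + t ^ 2) ^ 2 :=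
  calc a ^ 2 ≤ (a ^ 2) ^ 2 := le_self_pow₀ (one_le_pow₀ ha) two_ne_zero
    _ ≤ (a ^ 2 + t ^ 2) ^ 2 := by gcongr; exact le_add_of_nonneg_right (sq_nonneg t)

lemma sq_sqrt_mul_div_sq_add_sq_le {a : ℝ} (ha : 0 ≤ a) (t : ℝ) :
    (√a * (a / (a ^ 2 + t ^ 2))) ^ 2 ≤ a / (a ^ 2 + t ^ 2) := by
  calc (√a * (a / (a ^ 2 + t ^ 2))) ^ 2 = a ^ 2 * (a / (a ^ 2 + t ^ 2) ^ 2) := by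
        rw [mul_pow, div_pow, Real.sq_sqrt ha]; ring
    _ ≤ a / (a ^ 2 + t ^ 2) := mul_div_sq_le_div (sq_nonneg a) (le_add_of_nonneg_right (sq_nonneg t)) ha

lemma mul_div_one_add_le_sq {lam s u U : ℝ} (hlam : 0 ≤ lam) (hs : 0 ≤ s) (hsu : s ≤ u)
    (huU : u ≤ U) : s * u / (1 + 4 * lam * u) ≤ U ^ 2 := by
  have hu : 0 ≤ u := hs.trans hsu
  calc s * u / (1 + 4 * lam * u) ≤ s * u := div_le_self (by positivity) (by nlinarith)
    _ ≤ U ^ 2 := by nlinarith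

lemma tendsto_indicator_setOf_le_natCast {X E : Type*} [Zero E] [TopologicalSpace E]
    (ω : X → ℝ) (f : X → E) (x : X) :
    Tendsto (fun n : ℕ => {y | ω y ≤ n}.indicator f x) atTop (𝓝 (f x)) :=
  tendsto_const_nhds.congr' <| (eventually_ge_atTop ⌈ω x⌉₊).mono fun n hn =>
    (indicator_of_mem (show x ∈ {y | ω y ≤ (n : ℝ)} from Nat.ceil_le.mp hn) f).symm

lemma sq_lintegral_le_measure_univ_mul {α : Type*} [MeasurableSpace α] (ν : Measure α)
    {h : α → ℝ≥0∞} (hh : AEMeasurable h ν) :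
    (∫⁻ x, h x ∂ν) ^ 2 ≤ ν univ * ∫⁻ x, h x ^ 2 ∂ν := by
  have holder := ENNReal.lintegral_mul_le_Lp_mul_Lq ν .two_two aemeasurable_const hh
    (f := fun _ => 1)
  simp only [Pi.mul_apply, one_mul, ENNReal.one_rpow, lintegral_const] at holder
  calc (∫⁻ x, h x ∂ν) ^ 2
      ≤ (ν univ ^ (1 / (2:ℝ)) * (∫⁻ x, h x ^ (2:ℝ) ∂ν) ^ (1 / (2:ℝ))) ^ 2 := by gcongr
    _ = ν univ * ∫⁻ x, h x ^ 2 ∂ν := by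
      rw [mul_pow, ← ENNReal.rpow_mul_natCast, ← ENNReal.rpow_mul_natCast]
      norm_num

lemma lintegral_Ioi_div_sq_add_sq {a : ℝ} (ha : 0 < a) :
    ∫⁻ t in Ioi 0, ENNReal.ofReal (a / (a ^ 2 + t ^ 2)) = ENNReal.ofReal (π / 2) := by
  have hderiv : ∀ t ∈ Ici (0:ℝ),
      HasDerivAt (fun t => Real.arctan (t / a)) (a / (a ^ 2 + t ^ 2)) t := by
    intro t _
    refine (((hasDerivAt_id t).div_const a).arctan).congr_deriv ?_
    simp only [id]
    field_simp
  have hnonneg : ∀ t ∈ Ioi (0:ℝ), 0 ≤ a / (a ^ 2 + t ^ 2) := fun t _ => by positivity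
  have hlim : Tendsto (fun t => Real.arctan (t / a)) atTop (𝓝 (π / 2)) :=
    (tendsto_nhds_of_tendsto_nhdsWithin Real.tendsto_arctan_atTop).comp
      (tendsto_id.atTop_div_const ha)
  rw [← ofReal_integral_eq_lintegral_ofReal
      (integrableOn_Ioi_deriv_of_nonneg' hderiv hnonneg hlim)
      ((ae_restrict_iff' measurableSet_Ioi).2 (ae_of_all _ hnonneg)),
    integral_Ioi_of_hasDerivAt_of_nonneg' hderiv hnonneg hlim]
  simp

lemma lintegral_Ioi_sq_lintegral_le {α : Type*} [MeasurableSpace α] (ν : Measure α) [SFinite ν]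
    {a : α → ℝ} (ha : Measurable a) (ha0 : ∀ᵐ x ∂ν, 0 < a x) :
    ∫⁻ t in Ioi 0, (∫⁻ x, ENNReal.ofReal (√(a x) * (a x / (a x ^ 2 + t ^ 2))) ∂ν) ^ 2
      ≤ ν univ ^ 2 * ENNReal.ofReal (π / 2) := by
  set h : ℝ → α → ℝ≥0∞ := fun t x => ENNReal.ofReal (√(a x) * (a x / (a x ^ 2 + t ^ 2)))
  have hh : Measurable (uncurry fun t x => h t x ^ 2) := by
    simp only [h]; fun_prop
  calc ∫⁻ t in Ioi 0, (∫⁻ x, h t x ∂ν) ^ 2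
      ≤ ∫⁻ t in Ioi 0, ν univ * ∫⁻ x, h t x ^ 2 ∂ν :=
        lintegral_mono fun t => sq_lintegral_le_measure_univ_mul ν (by simp only [h]; fun_prop)
    _ = ν univ * ∫⁻ x, (∫⁻ t in Ioi 0, h t x ^ 2) ∂ν := by
        have hm : Measurable fun t => ∫⁻ x, h t x ^ 2 ∂ν := hh.lintegral_prod_right'
        rw [lintegral_const_mul _ hm, lintegral_lintegral_swap hh.aemeasurable]
    _ ≤ ν univ * ∫⁻ _, ENNReal.ofReal (π / 2) ∂ν := by
        gcongr 1
        refine lintegral_mono_ae (ha0.mono fun x hx => ?_)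
        rw [← lintegral_Ioi_div_sq_add_sq hx]
        refine lintegral_mono fun t => ?_
        rw [← ENNReal.ofReal_pow (by positivity)]
        exact ENNReal.ofReal_le_ofReal (sq_sqrt_mul_div_sq_add_sq_le hx.le t)
    _ = ν univ ^ 2 * ENNReal.ofReal (π / 2) := by rw [lintegral_const]; ring

section WeightedIntegrals

-- `d t (ω x)` is the denominator `ω² + t²` of `G₁` or `(ω² + t²)²` of `G₂`.
variable {X : Type*} [MeasurableSpace X] {μ : Measure X} {ω : X → ℝ} {f g : X → ℂ}
  {d : ℝ → ℝ → ℝ}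

lemma integrable_rpow_neg_half_mul_norm_sq (hω : Measurable ω) (hf : Measurable f)
    (hω1 : ∀ᵐ x ∂μ, 1 ≤ ω x)
    (hint : ∫⁻ x, ENNReal.ofReal (ω x ^ (-(1:ℝ)/2) * ‖f x‖ ^ 2) ∂μ < ⊤) :
    Integrable (fun x => ω x ^ (-(1:ℝ)/2) * ‖f x‖ ^ 2) μ := by
  have hnonneg : 0 ≤ᵐ[μ] fun x => ω x ^ (-(1:ℝ)/2) * ‖f x‖ ^ 2 :=
    hω1.mono fun _ hx => by
      have := zero_le_one.trans hx
      positivity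
  exact ⟨by fun_prop, (hasFiniteIntegral_iff_ofReal hnonneg).2 hint⟩

lemma mul_norm_sq_div_nonneg (hω1 : ∀ᵐ x ∂μ, 1 ≤ ω x)
    (hd_ge : ∀ t a, 1 ≤ a → a ^ 2 ≤ d t a) (t : ℝ) :
    ∀ᵐ x ∂μ, 0 ≤ ω x * ‖g x‖ ^ 2 / d t (ω x) :=
  hω1.mono fun _ hx =>
    div_nonneg (mul_nonneg (zero_le_one.trans hx) (sq_nonneg _))
      ((sq_nonneg _).trans (hd_ge t _ hx))

lemma norm_mul_norm_sq_div_le (hω1 : ∀ᵐ x ∂μ, 1 ≤ ω x)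
    (hd_ge : ∀ t a, 1 ≤ a → a ^ 2 ≤ d t a) (hgf : ∀ x, ‖g x‖ ≤ ‖f x‖) (t : ℝ) :
    ∀ᵐ x ∂μ, ‖ω x * ‖g x‖ ^ 2 / d t (ω x)‖ ≤ ω x ^ (-(1:ℝ)/2) * ‖f x‖ ^ 2 := by
  filter_upwards [hω1, mul_norm_sq_div_nonneg hω1 hd_ge t] with x hx hx0
  rw [Real.norm_of_nonneg hx0]
  exact div_le_rpow_neg_half_mul hx (hd_ge t _ hx) (sq_nonneg _)
    (pow_le_pow_left₀ (norm_nonneg _) (hgf x) 2)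

lemma aestronglyMeasurable_mul_norm_sq_div (hω : Measurable ω) (hd : Continuous (uncurry d))
    (hg : Measurable g) (t : ℝ) :
    AEStronglyMeasurable (fun x => ω x * ‖g x‖ ^ 2 / d t (ω x)) μ :=
  ((hω.mul (hg.norm.pow_const 2)).div
    ((hd.uncurry_left t).measurable.comp hω)).aestronglyMeasurable

lemma integrable_mul_norm_sq_div (hω : Measurable ω) (hω1 : ∀ᵐ x ∂μ, 1 ≤ ω x)
    (hB : Integrable (fun x => ω x ^ (-(1:ℝ)/2) * ‖f x‖ ^ 2) μ)
    (hd : Continuous (uncurry d)) (hd_ge : ∀ t a, 1 ≤ a → a ^ 2 ≤ d t a)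
    (hg : Measurable g) (hgf : ∀ x, ‖g x‖ ≤ ‖f x‖) (t : ℝ) :
    Integrable (fun x => ω x * ‖g x‖ ^ 2 / d t (ω x)) μ :=
  hB.mono' (aestronglyMeasurable_mul_norm_sq_div hω hd hg t)
    (norm_mul_norm_sq_div_le hω1 hd_ge hgf t)

lemma integral_mul_norm_sq_div_nonneg (hω1 : ∀ᵐ x ∂μ, 1 ≤ ω x)
    (hd_ge : ∀ t a, 1 ≤ a → a ^ 2 ≤ d t a) (t : ℝ) :
    0 ≤ ∫ x, ω x * ‖g x‖ ^ 2 / d t (ω x) ∂μ :=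
  integral_nonneg_of_ae (mul_norm_sq_div_nonneg hω1 hd_ge t)

lemma integral_mul_norm_sq_div_mono (hω : Measurable ω) (hf : Measurable f)
    (hω1 : ∀ᵐ x ∂μ, 1 ≤ ω x) (hB : Integrable (fun x => ω x ^ (-(1:ℝ)/2) * ‖f x‖ ^ 2) μ)
    (hd : Continuous (uncurry d)) (hd_ge : ∀ t a, 1 ≤ a → a ^ 2 ≤ d t a)
    (hg : Measurable g) (hgf : ∀ x, ‖g x‖ ≤ ‖f x‖) (t : ℝ) :
    ∫ x, ω x * ‖g x‖ ^ 2 / d t (ω x) ∂μ ≤ ∫ x, ω x * ‖f x‖ ^ 2 / d t (ω x) ∂μ := by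
  refine integral_mono_ae (integrable_mul_norm_sq_div hω hω1 hB hd hd_ge hg hgf t)
    (integrable_mul_norm_sq_div hω hω1 hB hd hd_ge hf (fun _ => le_rfl) t) ?_
  filter_upwards [hω1] with x hx
  have hx0 : 0 ≤ ω x := zero_le_one.trans hx
  gcongr
  · exact (sq_nonneg _).trans (hd_ge t _ hx)
  · exact hgf x

lemma continuous_integral_mul_norm_sq_div (hω : Measurable ω) (hω1 : ∀ᵐ x ∂μ, 1 ≤ ω x)
    (hB : Integrable (fun x => ω x ^ (-(1:ℝ)/2) * ‖f x‖ ^ 2) μ)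
    (hd : Continuous (uncurry d)) (hd_ge : ∀ t a, 1 ≤ a → a ^ 2 ≤ d t a)
    (hg : Measurable g) (hgf : ∀ x, ‖g x‖ ≤ ‖f x‖) :
    Continuous fun t => ∫ x, ω x * ‖g x‖ ^ 2 / d t (ω x) ∂μ := by
  refine continuous_of_dominated (aestronglyMeasurable_mul_norm_sq_div hω hd hg)
    (norm_mul_norm_sq_div_le hω1 hd_ge hgf) hB (hω1.mono fun x hx => ?_)
  refine continuous_const.div (hd.uncurry_right (ω x)) fun t => ?_
  exact (one_pos.trans_le (one_le_pow₀ hx)).trans_le (hd_ge t _ hx) |>.ne'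

lemma tendsto_integral_mul_norm_sq_div_indicator (hω : Measurable ω) (hf : Measurable f)
    (hω1 : ∀ᵐ x ∂μ, 1 ≤ ω x) (hB : Integrable (fun x => ω x ^ (-(1:ℝ)/2) * ‖f x‖ ^ 2) μ)
    (hd : Continuous (uncurry d)) (hd_ge : ∀ t a, 1 ≤ a → a ^ 2 ≤ d t a) (t : ℝ) :
    Tendsto (fun n : ℕ => ∫ x, ω x * ‖{y | ω y ≤ n}.indicator f x‖ ^ 2 / d t (ω x) ∂μ) atTop
      (𝓝 (∫ x, ω x * ‖f x‖ ^ 2 / d t (ω x) ∂μ)) := by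
  refine tendsto_integral_of_dominated_convergence _
    (fun n => aestronglyMeasurable_mul_norm_sq_div hω hd (hf.indicator (hω measurableSet_Iic)) t)
    hB (fun n => norm_mul_norm_sq_div_le hω1 hd_ge (norm_indicator_le_norm_self f) t)
    (ae_of_all _ fun x => ?_)
  exact (((tendsto_indicator_setOf_le_natCast ω f x).norm.pow 2).const_mul _).div_const _

lemma sq_mul_integral_div_sq_le (hω : Measurable ω) (hω1 : ∀ᵐ x ∂μ, 1 ≤ ω x)
    (hB : Integrable (fun x => ω x ^ (-(1:ℝ)/2) * ‖f x‖ ^ 2) μ)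
    (hg : Measurable g) (hgf : ∀ x, ‖g x‖ ≤ ‖f x‖) (t : ℝ) :
    t ^ 2 * ∫ x, ω x * ‖g x‖ ^ 2 / ((ω x) ^ 2 + t ^ 2) ^ 2 ∂μ
      ≤ ∫ x, ω x * ‖g x‖ ^ 2 / ((ω x) ^ 2 + t ^ 2) ∂μ := by
  rw [← integral_const_mul]
  refine integral_mono_ae ((integrable_mul_norm_sq_div (d := fun t a => (a ^ 2 + t ^ 2) ^ 2)
      hω hω1 hB (by fun_prop) (fun t _ ha => sq_le_sq_add_sq_sq ha t) hg hgf t).const_mul _)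
    (integrable_mul_norm_sq_div (d := fun t a => a ^ 2 + t ^ 2)
      hω hω1 hB (by fun_prop) (fun t a _ => le_add_of_nonneg_right (sq_nonneg t)) hg hgf t) ?_
  filter_upwards [hω1] with x hx
  exact mul_div_sq_le_div (sq_nonneg t) (le_add_of_nonneg_left (sq_nonneg _))
    (mul_nonneg (zero_le_one.trans hx) (sq_nonneg _))

lemma ofReal_integral_eq_lintegral_withDensity (hω : Measurable ω) (hf : Measurable f)
    (hω1 : ∀ᵐ x ∂μ, 1 ≤ ω x) (hB : Integrable (fun x => ω x ^ (-(1:ℝ)/2) * ‖f x‖ ^ 2) μ)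
    (t : ℝ) :
    ENNReal.ofReal (∫ x, ω x * ‖f x‖ ^ 2 / ((ω x) ^ 2 + t ^ 2) ∂μ)
      = ∫⁻ x, ENNReal.ofReal (√(ω x) * (ω x / (ω x ^ 2 + t ^ 2)))
          ∂μ.withDensity fun x => ENNReal.ofReal (ω x ^ (-(1:ℝ)/2) * ‖f x‖ ^ 2) := by
  rw [ofReal_integral_eq_lintegral_ofReal
      (integrable_mul_norm_sq_div (d := fun t a => a ^ 2 + t ^ 2) hω hω1 hB (by fun_prop)
        (fun t a _ => le_add_of_nonneg_right (sq_nonneg t)) hf (fun _ => le_rfl) t)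
      (mul_norm_sq_div_nonneg (d := fun t a => a ^ 2 + t ^ 2) hω1
        (fun t a _ => le_add_of_nonneg_right (sq_nonneg t)) t),
    lintegral_withDensity_eq_lintegral_mul _ (by fun_prop) (by fun_prop)]
  refine lintegral_congr_ae (hω1.mono fun x hx => ?_)
  have hx0 : 0 < ω x := one_pos.trans_le hx
  rw [Pi.mul_apply, ← ENNReal.ofReal_mul (by positivity), neg_div, Real.rpow_neg hx0.le,
    ← Real.sqrt_eq_rpow]
  have : √(ω x) ≠ 0 := (Real.sqrt_pos.2 hx0).ne'
  field_simp

lemma integrableOn_sq_integral_div_sq_add_sq (hω : Measurable ω) (hf : Measurable f)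
    (hω1 : ∀ᵐ x ∂μ, 1 ≤ ω x)
    (hint : ∫⁻ x, ENNReal.ofReal (ω x ^ (-(1:ℝ)/2) * ‖f x‖ ^ 2) ∂μ < ⊤) :
    IntegrableOn (fun t => (∫ x, ω x * ‖f x‖ ^ 2 / ((ω x) ^ 2 + t ^ 2) ∂μ) ^ 2) (Ioi 0) := by
  have hB := integrable_rpow_neg_half_mul_norm_sq hω hf hω1 hint
  set ν := μ.withDensity fun x => ENNReal.ofReal (ω x ^ (-(1:ℝ)/2) * ‖f x‖ ^ 2)
  have hν : ν univ < ∞ := by rwa [withDensity_apply _ MeasurableSet.univ, setLIntegral_univ]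
  have : IsFiniteMeasure ν := ⟨hν⟩
  have hων : ∀ᵐ x ∂ν, 0 < ω x :=
    (withDensity_absolutelyContinuous μ _).ae_le (hω1.mono fun _ hx => one_pos.trans_le hx)
  refine ⟨((continuous_integral_mul_norm_sq_div (d := fun t a => a ^ 2 + t ^ 2) hω hω1 hB
      (by fun_prop) (fun t a _ => le_add_of_nonneg_right (sq_nonneg t)) hf
      (fun _ => le_rfl)).pow 2).aestronglyMeasurable,
    (hasFiniteIntegral_iff_ofReal (ae_of_all _ fun _ => sq_nonneg _)).2 ?_⟩
  calc ∫⁻ t in Ioi 0, ENNReal.ofReal ((∫ x, ω x * ‖f x‖ ^ 2 / ((ω x) ^ 2 + t ^ 2) ∂μ) ^ 2)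
      = ∫⁻ t in Ioi 0, (∫⁻ x, ENNReal.ofReal (√(ω x) * (ω x / (ω x ^ 2 + t ^ 2))) ∂ν) ^ 2 := by
        refine lintegral_congr fun t => ?_
        rw [ENNReal.ofReal_pow (integral_mul_norm_sq_div_nonneg (d := fun t a => a ^ 2 + t ^ 2)
          hω1 (fun t a _ => le_add_of_nonneg_right (sq_nonneg t)) t),
          ofReal_integral_eq_lintegral_withDensity hω hf hω1 hB]
    _ ≤ ν univ ^ 2 * ENNReal.ofReal (π / 2) := lintegral_Ioi_sq_lintegral_le ν hω hων
    _ < ∞ := mul_lt_top (pow_lt_top hν) ofReal_lt_top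

end WeightedIntegrals

lemma tendsto_integral_trace_of_tendsto {u v : ℕ → ℝ → ℝ} {U V : ℝ → ℝ} {lam : ℝ}
    (hlam : 0 ≤ lam) (hu : ∀ n, Measurable (u n)) (hv : ∀ n, Measurable (v n))
    (hv0 : ∀ n t, 0 ≤ v n t) (hvu : ∀ n t, t ^ 2 * v n t ≤ u n t) (huU : ∀ n t, u n t ≤ U t)
    (hU : IntegrableOn (fun t => U t ^ 2) (Ioi 0))
    (hu_lim : ∀ t, Tendsto (fun n => u n t) atTop (𝓝 (U t)))
    (hv_lim : ∀ t, Tendsto (fun n => v n t) atTop (𝓝 (V t))) :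
    Tendsto (fun n => ∫ t in Ioi 0, t ^ 2 * v n t * u n t / (1 + 4 * lam * u n t)) atTop
      (𝓝 (∫ t in Ioi 0, t ^ 2 * V t * U t / (1 + 4 * lam * U t))) := by
  refine tendsto_integral_of_dominated_convergence (fun t => U t ^ 2)
    (fun n => ((((measurable_id.pow_const 2).mul (hv n)).mul (hu n)).div
      (measurable_const.add (measurable_const.mul (hu n)))).aestronglyMeasurable) hU
    (fun n => ae_of_all _ fun t => ?_) (ae_of_all _ fun t => ?_)
  · have hs : 0 ≤ t ^ 2 * v n t := mul_nonneg (sq_nonneg t) (hv0 n t)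
    have hu0 : 0 ≤ u n t := hs.trans (hvu n t)
    rw [Real.norm_of_nonneg (by positivity)]
    exact mul_div_one_add_le_sq hlam hs (hvu n t) (huU n t)
  · have hU0 : 0 ≤ U t :=
      ge_of_tendsto' (hu_lim t) fun n => (mul_nonneg (sq_nonneg t) (hv0 n t)).trans (hvu n t)
    exact ((((hv_lim t).const_mul _).mul (hu_lim t)).div
      (((hu_lim t).const_mul _).const_add 1) (by positivity))

/-- Convergence of the regularized traces (Proposition 5.1): with cutoffs
`f_n = 1_{ω ≤ n} f`, `G₁(g,t) = ∫ ω|g|²/(ω²+t²) dμ`, `G₂(g,t) = ∫ ω|g|²/(ω²+t²)² dμ`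
and `I(g) = ∫₀^∞ t² G₂(g,t) G₁(g,t)/(1 + 4λG₁(g,t)) dt`, if `ω ≥ 1` a.e. and
`∫ ω^{-1/2}|f|² dμ < ∞`, then `I(f_n) → I(f)`. -/
theorem convergence_regularized_trace
    {X : Type*} [MeasurableSpace X] (μ : Measure X)
    (ω : X → ℝ) (hω : Measurable ω) (hω1 : ∀ᵐ x ∂μ, 1 ≤ ω x)
    (f : X → ℂ) (hf : Measurable f)
    (hint : ∫⁻ x, ENNReal.ofReal (ω x ^ (-(1:ℝ)/2) * ‖f x‖ ^ 2) ∂μ < ⊤)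
    (lam : ℝ) (hlam : 0 ≤ lam)
    (G₁ G₂ : (X → ℂ) → ℝ → ℝ) (I : (X → ℂ) → ℝ)
    (hG₁ : ∀ g t, G₁ g t = ∫ x, ω x * ‖g x‖ ^ 2 / ((ω x) ^ 2 + t ^ 2) ∂μ)
    (hG₂ : ∀ g t, G₂ g t = ∫ x, ω x * ‖g x‖ ^ 2 / ((ω x) ^ 2 + t ^ 2) ^ 2 ∂μ)
    (hI : ∀ g, I g = ∫ t in Set.Ioi (0:ℝ),
        t ^ 2 * G₂ g t * G₁ g t / (1 + 4 * lam * G₁ g t)) :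
    Filter.Tendsto (fun n : ℕ => I ({x | ω x ≤ (n : ℝ)}.indicator f))
      Filter.atTop (nhds (I f)) := by
  have hB := integrable_rpow_neg_half_mul_norm_sq hω hf hω1 hint
  have hd₁ : Continuous (uncurry fun t a : ℝ => a ^ 2 + t ^ 2) := by fun_prop
  have hd₂ : Continuous (uncurry fun t a : ℝ => (a ^ 2 + t ^ 2) ^ 2) := by fun_prop
  have hd₁_ge : ∀ t a : ℝ, 1 ≤ a → a ^ 2 ≤ a ^ 2 + t ^ 2 :=
    fun t a _ => le_add_of_nonneg_right (sq_nonneg t)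
  have hd₂_ge : ∀ t a : ℝ, 1 ≤ a → a ^ 2 ≤ (a ^ 2 + t ^ 2) ^ 2 :=
    fun t _ ha => sq_le_sq_add_sq_sq ha t
  have hF : ∀ n : ℕ, Measurable ({x | ω x ≤ n}.indicator f) :=
    fun n => hf.indicator (hω measurableSet_Iic)
  have hFf : ∀ (n : ℕ) x, ‖{x | ω x ≤ n}.indicator f x‖ ≤ ‖f x‖ :=
    fun n => norm_indicator_le_norm_self f
  simp only [hI, hG₁, hG₂]
  exact tendsto_integral_trace_of_tendsto hlam
    (fun n => (continuous_integral_mul_norm_sq_div hω hω1 hB hd₁ hd₁_ge (hF n) (hFf n)).measurable)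
    (fun n => (continuous_integral_mul_norm_sq_div hω hω1 hB hd₂ hd₂_ge (hF n) (hFf n)).measurable)
    (fun n => integral_mul_norm_sq_div_nonneg hω1 hd₂_ge)
    (fun n => sq_mul_integral_div_sq_le hω hω1 hB (hF n) (hFf n))
    (fun n => integral_mul_norm_sq_div_mono hω hf hω1 hB hd₁ hd₁_ge (hF n) (hFf n))
    (integrableOn_sq_integral_div_sq_add_sq hω hf hω1 hint)
    (tendsto_integral_mul_norm_sq_div_indicator hω hf hω1 hB hd₁ hd₁_ge)
    (tendsto_integral_mul_norm_sq_div_indicator hω hf hω1 hB hd₂ hd₂_ge)
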